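/- Let A be a unital Banach algebra and X a unit-linked Banach A-bimodule. Suppose θ ≥ 0, p < 1, f : A → X with f(0) = 0, and g : A → X with g(0) = g(1) = 0 satisfy max{‖f(λa + λb + c²) − λf(a) − λf(b) − c·f(c) − g(c)·c‖, ‖g(λab + λc) − λa·g(b) − λ·g(a)·b − λg(c)‖} ≤ θ(‖a‖^p + ‖b‖^p + ‖c‖^p) for all a,b,c ∈ A and all λ ∈ ℂ with |λ| = 1. Then there exists a unique generalized Jordan derivation d : A → X such that ‖f(a) − d(a)‖ ≤ θ‖a‖^p / (1 − 2^{p−1}) for all a ∈ A. -/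

import Mathlib

open Filter Topology MulOpposite

set_option linter.unusedSectionVars false
set_option linter.unusedVariables false

section

variable {A X : Type*}
  [NormedRing A] [NormedAlgebra ℂ A] [CompleteSpace A]
  [NormedAddCommGroup X] [NormedSpace ℂ X] [CompleteSpace X]
  [Module A X] [Module Aᵐᵒᵖ X]
  [IsBoundedSMul A X] [IsBoundedSMul Aᵐᵒᵖ X]
  [SMulCommClass A Aᵐᵒᵖ X]
  [IsScalarTower ℂ A X] [IsScalarTower ℂ Aᵐᵒᵖ X]

/-- A Jordan derivation from `A` into the bimodule `X`: a `ℂ`-linear map `δ` with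
`δ(a²) = a·δ(a) + δ(a)·a`. -/
def IsJordanDeriv (δ : A → X) : Prop :=
  (∀ x y : A, δ (x + y) = δ x + δ y) ∧ (∀ (μ : ℂ) (x : A), δ (μ • x) = μ • δ x) ∧
    ∀ a : A, δ (a ^ 2) = a • δ a + op a • δ a

/-- A generalized Jordan derivation: a `ℂ`-linear map `d` such that there is a Jordan
derivation `δ` with `d(a²) = a·d(a) + δ(a)·a`. -/
def IsGenJordanDeriv (d : A → X) : Prop :=
  (∀ x y : A, d (x + y) = d x + d y) ∧ (∀ (μ : ℂ) (x : A), d (μ • x) = μ • d x) ∧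
    ∃ δ : A → X, IsJordanDeriv δ ∧ ∀ a : A, d (a ^ 2) = a • d a + op a • δ a

/-!
Hyers' direct method. Putting `c = 0` in the first inequality, and `a = 1` in the second, shows
that `f` and `g` are approximately additive, so `F a = lim 2⁻ⁿ f (2ⁿ a)` and
`G a = lim 2⁻ⁿ g (2ⁿ a)` exist, and `‖f a - F a‖` is bounded by a geometric series of ratio
`2 ^ (p - 1)`. The other specialisations of the inequality pass to the limit (along `2n` for
squares, which scale by `4ⁿ`): `F` and `G` are additive and homogeneous over the unit circle,
hence `ℂ`-linear, `G` is a Jordan derivation and `F (a²) = a F(a) + G(a) a`. Two maps with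
these properties within `O(‖a‖ ^ p)` of `f` differ by an additive `D` with
`D a = 2⁻ⁿ D (2ⁿ a) → 0`.

For `p ≠ 0` (where `‖0‖ ^ p = 0`) the Hyers bound is the claimed one. For `p = 0` the control
is the constant `3θ`, because `‖0‖ ^ 0 = 1`, and the Hyers bound is only `3θ`. There `g = G`
exactly, since `n (g - G)(b)` stays bounded, so `e = f - F` satisfies
`‖e (w²) - w e(w)‖ ≤ 3θ`. This makes `e` of size `O(1 / n²)` at the almost scalar elements
`n² ± 2y`, and comparing the inequality at `(y, y, n)` and `(-y, -y, n)` gives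
`4 ‖e y‖ ≤ 6θ + O(1 / n²)`.
-/

section Hyers

variable {𝕜 E Y : Type*} [RCLike 𝕜] [NormedAddCommGroup E] [NormedSpace 𝕜 E]
  [NormedAddCommGroup Y] [NormedSpace 𝕜 Y]

variable (𝕜) in
def hyersSeq (q : E → Y) (a : E) (n : ℕ) : Y := ((2 : 𝕜) ^ n)⁻¹ • q ((2 : 𝕜) ^ n • a)

variable (𝕜) in
noncomputable def hyersLimit (q : E → Y) (a : E) : Y := limUnder atTop (hyersSeq 𝕜 q a)

lemma norm_two_pow_smul_rpow (p : ℝ) (n : ℕ) (a : E) :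
    ‖(2 : 𝕜) ^ n • a‖ ^ p = ((2 : ℝ) ^ p) ^ n * ‖a‖ ^ p := by
  rw [norm_smul, norm_pow, RCLike.norm_ofNat, Real.mul_rpow (by positivity) (norm_nonneg a),
    Real.rpow_pow_comm zero_le_two]

lemma tendsto_inv_two_pow_smul_of_norm_le {p C D : ℝ} (hp : p < 1) {w : ℕ → Y}
    (hw : ∀ n, ‖w n‖ ≤ C * ((2 : ℝ) ^ p) ^ n + D) :
    Tendsto (fun n ↦ ((2 : 𝕜) ^ n)⁻¹ • w n) atTop (𝓝 0) := by
  have hr : (2 : ℝ) ^ (p - 1) < 1 := Real.rpow_lt_one_of_one_lt_of_neg one_lt_two (by linarith)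
  have hlim := ((tendsto_pow_atTop_nhds_zero_of_lt_one (by positivity) hr).const_mul C).add
    ((tendsto_pow_atTop_nhds_zero_of_lt_one (by norm_num : (0 : ℝ) ≤ 2⁻¹)
      (by norm_num)).const_mul D)
  rw [mul_zero, mul_zero, add_zero] at hlim
  refine squeeze_zero_norm (fun n ↦ ?_) hlim
  rw [norm_smul, norm_inv, norm_pow, RCLike.norm_ofNat, Real.rpow_sub_one two_ne_zero, div_pow,
    inv_pow, inv_mul_le_iff₀ (by positivity)]
  calc ‖w n‖ ≤ C * ((2 : ℝ) ^ p) ^ n + D := hw n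
    _ = 2 ^ n * (C * (((2 : ℝ) ^ p) ^ n / 2 ^ n) + D * (2 ^ n)⁻¹) := by field_simp

lemma eq_of_tendsto_of_sub_eq_inv_two_pow_smul {p C D : ℝ} (hp : p < 1) {u v w : ℕ → Y}
    {L M : Y} (hu : Tendsto u atTop (𝓝 L)) (hv : Tendsto v atTop (𝓝 M))
    (huv : ∀ n, u n - v n = ((2 : 𝕜) ^ n)⁻¹ • w n)
    (hw : ∀ n, ‖w n‖ ≤ C * ((2 : ℝ) ^ p) ^ n + D) : L = M := by
  refine sub_eq_zero.mp (tendsto_nhds_unique (hu.sub hv) ?_)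
  simpa only [huv] using tendsto_inv_two_pow_smul_of_norm_le hp hw

lemma hyersSeq_succ_sub (q : E → Y) (a : E) (n : ℕ) :
    hyersSeq 𝕜 q a (n + 1) - hyersSeq 𝕜 q a n = ((2 : 𝕜) ^ (n + 1))⁻¹ •
      (q ((2 : 𝕜) ^ n • a + (2 : 𝕜) ^ n • a) - q ((2 : 𝕜) ^ n • a) - q ((2 : 𝕜) ^ n • a)) := by
  have h1 : (2 : 𝕜) ^ (n + 1) • a = (2 : 𝕜) ^ n • a + (2 : 𝕜) ^ n • a := by
    rw [pow_succ, mul_two, add_smul]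
  have h2 : ((2 : 𝕜) ^ n)⁻¹ = 2 * ((2 : 𝕜) ^ (n + 1))⁻¹ := by field_simp; ring
  rw [hyersSeq, hyersSeq, h1, h2]
  module

lemma dist_hyersSeq_succ_le {q : E → Y} {p C D : ℝ}
    (hq : ∀ y, ‖q (y + y) - q y - q y‖ ≤ C * ‖y‖ ^ p + D) (a : E) (n : ℕ) :
    dist (hyersSeq 𝕜 q a n) (hyersSeq 𝕜 q a (n + 1)) ≤
      C * ‖a‖ ^ p / 2 * (2 ^ (p - 1)) ^ n + D / 2 * (1 / 2) ^ n := by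
  rw [dist_comm, dist_eq_norm, hyersSeq_succ_sub, norm_smul, norm_inv, norm_pow,
    RCLike.norm_ofNat]
  calc _ ≤ (2 ^ (n + 1))⁻¹ * (C * ‖(2 : 𝕜) ^ n • a‖ ^ p + D) := by gcongr; exact hq _
    _ = _ := by
      rw [norm_two_pow_smul_rpow, Real.rpow_sub_one two_ne_zero]
      simp only [one_div, inv_pow, div_pow]
      field_simp
      ring

lemma hasSum_dist_hyersSeq_bound {p : ℝ} (hp : p < 1) (c D : ℝ) :
    HasSum (fun n : ℕ ↦ c / 2 * (2 ^ (p - 1)) ^ n + D / 2 * (1 / 2) ^ n)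
      (c / 2 / (1 - 2 ^ (p - 1)) + D) := by
  rw [show c / 2 / (1 - 2 ^ (p - 1)) + D = c / 2 * (1 - 2 ^ (p - 1))⁻¹ + D / 2 * 2 by ring]
  exact ((hasSum_geometric_of_lt_one (by positivity)
    (Real.rpow_lt_one_of_one_lt_of_neg one_lt_two (by linarith))).mul_left _).add
    (hasSum_geometric_two.mul_left _)

lemma tendsto_hyersSeq_of_norm_sub_le {q d : E → Y} (hd : ∀ (μ : 𝕜) x, d (μ • x) = μ • d x)
    {p C : ℝ} (hp : p < 1) (hqd : ∀ a, ‖q a - d a‖ ≤ C * ‖a‖ ^ p) (a : E) :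
    Tendsto (hyersSeq 𝕜 q a) atTop (𝓝 (d a)) := by
  rw [← tendsto_sub_nhds_zero_iff]
  refine (tendsto_inv_two_pow_smul_of_norm_le (𝕜 := 𝕜) (C := C * ‖a‖ ^ p) (D := 0) hp
    (w := fun n ↦ q ((2 : 𝕜) ^ n • a) - d ((2 : 𝕜) ^ n • a))
    fun n ↦ (hqd _).trans_eq (by rw [norm_two_pow_smul_rpow]; ring)).congr fun n ↦ ?_
  rw [smul_sub, hd, smul_smul, inv_mul_cancel₀ (pow_ne_zero _ two_ne_zero), one_smul, hyersSeq]

lemma map_add_of_tendsto_hyersSeq {q Q : E → Y}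
    (hQ : ∀ a, Tendsto (hyersSeq 𝕜 q a) atTop (𝓝 (Q a))) {p C D : ℝ} (hp : p < 1)
    (hq : ∀ x y, ‖q (x + y) - q x - q y‖ ≤ C * (‖x‖ ^ p + ‖y‖ ^ p) + D) (x y : E) :
    Q (x + y) = Q x + Q y :=
  eq_of_tendsto_of_sub_eq_inv_two_pow_smul (𝕜 := 𝕜) hp (hQ (x + y)) ((hQ x).add (hQ y))
    (C := C * (‖x‖ ^ p + ‖y‖ ^ p)) (D := D)
    (fun n ↦ by simp only [hyersSeq, smul_add]; module)
    (fun n ↦ (hq _ _).trans_eq (by rw [norm_two_pow_smul_rpow, norm_two_pow_smul_rpow]; ring))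

lemma map_smul_of_tendsto_hyersSeq {q Q : E → Y}
    (hQ : ∀ a, Tendsto (hyersSeq 𝕜 q a) atTop (𝓝 (Q a))) {p C D : ℝ} (hp : p < 1) (μ : 𝕜)
    (hq : ∀ x, ‖q (μ • x) - μ • q x‖ ≤ C * ‖x‖ ^ p + D) (x : E) :
    Q (μ • x) = μ • Q x :=
  eq_of_tendsto_of_sub_eq_inv_two_pow_smul (𝕜 := 𝕜) hp (hQ (μ • x)) ((hQ x).const_smul μ)
    (C := C * ‖x‖ ^ p) (D := D)
    (fun n ↦ by
      rw [hyersSeq, hyersSeq, smul_comm _ μ x, smul_sub, smul_comm μ ((2 : 𝕜) ^ n)⁻¹])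
    (fun n ↦ (hq _).trans_eq (by rw [norm_two_pow_smul_rpow]; ring))

variable [CompleteSpace Y]

lemma tendsto_hyersSeq_hyersLimit {q : E → Y} {p C D : ℝ} (hp : p < 1)
    (hq : ∀ y, ‖q (y + y) - q y - q y‖ ≤ C * ‖y‖ ^ p + D) (a : E) :
    Tendsto (hyersSeq 𝕜 q a) atTop (𝓝 (hyersLimit 𝕜 q a)) :=
  tendsto_nhds_limUnder (cauchySeq_tendsto_of_complete (cauchySeq_of_dist_le_of_summable _
    (dist_hyersSeq_succ_le hq a) (hasSum_dist_hyersSeq_bound hp (C * ‖a‖ ^ p) D).summable))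

lemma norm_sub_hyersLimit_le {q : E → Y} {p C D : ℝ} (hp : p < 1)
    (hq : ∀ y, ‖q (y + y) - q y - q y‖ ≤ C * ‖y‖ ^ p + D) (a : E) :
    ‖q a - hyersLimit 𝕜 q a‖ ≤ C * ‖a‖ ^ p / 2 / (1 - 2 ^ (p - 1)) + D := by
  have hd := hasSum_dist_hyersSeq_bound hp (C * ‖a‖ ^ p) D
  rw [← hd.tsum_eq, ← dist_eq_norm]
  simpa [hyersSeq] using dist_le_tsum_of_dist_le_of_tendsto₀ _
    (dist_hyersSeq_succ_le (𝕜 := 𝕜) hq a) hd.summable (tendsto_hyersSeq_hyersLimit hp hq a)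

lemma norm_sub_hyersLimit_le_of_norm_le {q : E → Y} {D : ℝ}
    (hq : ∀ y, ‖q (y + y) - q y - q y‖ ≤ D) (a : E) : ‖q a - hyersLimit 𝕜 q a‖ ≤ D :=
  (norm_sub_hyersLimit_le (p := 0) (C := 0) zero_lt_one (fun y ↦ by simpa using hq y)
    a).trans_eq (by simp)

end Hyers

section Jordan

variable {𝕜 R M : Type*} [RCLike 𝕜] [NormedRing R] [NormedAlgebra 𝕜 R]
  [NormedAddCommGroup M] [NormedSpace 𝕜 M] [Module R M] [Module Rᵐᵒᵖ M]
  [IsBoundedSMul R M] [IsBoundedSMul Rᵐᵒᵖ M] [IsScalarTower 𝕜 R M] [IsScalarTower 𝕜 Rᵐᵒᵖ M]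

lemma map_sq_of_tendsto_hyersSeq {q r Q S : R → M}
    (hQ : ∀ a, Tendsto (hyersSeq 𝕜 q a) atTop (𝓝 (Q a)))
    (hS : ∀ a, Tendsto (hyersSeq 𝕜 r a) atTop (𝓝 (S a))) {p C D : ℝ} (hp : p < 1)
    (hq : ∀ c, ‖q (c ^ 2) - c • q c - op c • r c‖ ≤ C * ‖c‖ ^ p + D) (c : R) :
    Q (c ^ 2) = c • Q c + op c • S c := by
  have hQ2 : Tendsto (fun n ↦ hyersSeq 𝕜 q (c ^ 2) (2 * n)) atTop (𝓝 (Q (c ^ 2))) :=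
    (hQ _).comp (strictMono_mul_left_of_pos two_pos).tendsto_atTop
  refine eq_of_tendsto_of_sub_eq_inv_two_pow_smul (𝕜 := 𝕜) hp hQ2
    (((hQ c).const_smul c).add ((hS c).const_smul (op c))) (C := C * ‖c‖ ^ p) (D := D)
    (w := fun n ↦ ((2 : 𝕜) ^ n)⁻¹ • (q (((2 : 𝕜) ^ n • c) ^ 2)
      - ((2 : 𝕜) ^ n • c) • q ((2 : 𝕜) ^ n • c) - op ((2 : 𝕜) ^ n • c) • r ((2 : 𝕜) ^ n • c)))
    (fun n ↦ ?_) (fun n ↦ ?_)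
  · have h2n : (2 : 𝕜) ^ (2 * n) = (2 ^ n) ^ 2 := by ring
    simp only [hyersSeq, h2n, smul_pow, op_smul, smul_assoc, smul_sub, smul_smul,
      inv_mul_cancel₀ (pow_ne_zero n (two_ne_zero' 𝕜)), mul_one, smul_comm c ((2 : 𝕜) ^ n)⁻¹,
      smul_comm (op c) ((2 : 𝕜) ^ n)⁻¹, ← sq, inv_pow]
    abel
  · refine (norm_smul_le _ _).trans ((mul_le_of_le_one_left (norm_nonneg _) ?_).trans
      ((hq _).trans_eq (by rw [norm_two_pow_smul_rpow]; ring)))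
    rw [norm_inv, norm_pow, RCLike.norm_ofNat]
    exact inv_le_one_of_one_le₀ (one_le_pow₀ one_le_two)

end Jordan

lemma exists_add_eq_of_norm_le_two {ν : ℂ} (hν : ‖ν‖ ≤ 2) :
    ∃ z w : ℂ, ‖z‖ = 1 ∧ ‖w‖ = 1 ∧ z + w = ν := by
  set α := Real.arccos (‖ν‖ / 2)
  refine ⟨Complex.exp ((ν.arg + α : ℝ) * Complex.I), Complex.exp ((ν.arg - α : ℝ) * Complex.I),
    Complex.norm_exp_ofReal_mul_I _, Complex.norm_exp_ofReal_mul_I _, ?_⟩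
  have hcos : 2 * Complex.cos α = ‖ν‖ := by
    rw [← Complex.ofReal_cos, Real.cos_arccos (by linarith [norm_nonneg ν]) (by linarith)]
    push_cast
    ring
  conv_rhs => rw [← Complex.norm_mul_exp_arg_mul_I ν, ← hcos, Complex.two_cos]
  push_cast
  rw [add_mul, sub_mul, Complex.exp_add, Complex.exp_sub, neg_mul, Complex.exp_neg]
  ring

lemma map_smul_of_map_add_of_norm_eq_one {E Y : Type*} [AddCommGroup E] [Module ℂ E]
    [AddCommGroup Y] [Module ℂ Y] {Q : E → Y} (hadd : ∀ x y, Q (x + y) = Q x + Q y)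
    (hcirc : ∀ μ : ℂ, ‖μ‖ = 1 → ∀ x, Q (μ • x) = μ • Q x) (μ : ℂ) (x : E) :
    Q (μ • x) = μ • Q x := by
  obtain ⟨n, hn⟩ := exists_nat_gt ‖μ‖
  have hn_pos : (0 : ℝ) < n := (norm_nonneg μ).trans_lt hn
  have hμn : μ = n * (μ / n) := (mul_div_cancel₀ _ (by exact_mod_cast hn_pos.ne')).symm
  obtain ⟨z, w, hz, hw, hzw⟩ := exists_add_eq_of_norm_le_two (ν := μ / n) (by
    rw [norm_div, Complex.norm_natCast, div_le_iff₀ hn_pos]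
    linarith)
  calc Q (μ • x) = Q (n • (μ / n) • x) := by rw [← Nat.cast_smul_eq_nsmul ℂ, smul_smul, ← hμn]
    _ = n • Q ((μ / n) • x) := map_nsmul (AddMonoidHom.mk' Q hadd) n _
    _ = μ • Q x := by
      rw [← hzw, add_smul, hadd, hcirc z hz, hcirc w hw, ← add_smul, hzw,
        ← Nat.cast_smul_eq_nsmul ℂ, smul_smul, ← hμn]

section ConstantControl

variable {R M : Type*} [NormedRing R] [NormedAddCommGroup M] [NormedSpace ℝ M] [Module R M]

lemma eq_of_norm_sub_le_of_norm_map_mul_sub_le [Module Rᵐᵒᵖ M] [IsBoundedSMul Rᵐᵒᵖ M]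
    {g G : R → M} (hG : ∀ x y, G (x + y) = G x + G y) (hG1 : G 1 = 0) {K L : ℝ}
    (hgG : ∀ a, ‖g a - G a‖ ≤ L) (hg : ∀ a b, ‖g (a * b) - a • g b - op b • g a‖ ≤ K) :
    g = G := by
  funext b
  have hbound : ∀ n : ℕ, n * ‖g b - G b‖ ≤ L + ‖b‖ * L + K := by
    intro n
    have hGn : ∀ x, G (n • x) = n • G x := map_nsmul (AddMonoidHom.mk' G hG) n
    have hid : n • (g b - G b) = (g ((n : R) * b) - G ((n : R) * b))
        - op b • (g (n : R) - G (n : R))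
        - (g ((n : R) * b) - (n : R) • g b - op b • g (n : R)) := by
      rw [← nsmul_eq_mul, Nat.cast_smul_eq_nsmul, ← nsmul_one, hGn, hGn, hG1, nsmul_zero,
        sub_zero, smul_sub]
      abel
    rw [← nsmul_eq_mul, ← RCLike.norm_nsmul ℝ, hid]
    refine (norm_sub_le _ _).trans (add_le_add ((norm_sub_le _ _).trans
      (add_le_add (hgG _) ?_)) (hg _ _))
    exact (norm_smul_le _ _).trans (mul_le_mul_of_nonneg_left (hgG _) (norm_nonneg _))
  by_contra hne
  have hpos : 0 < ‖g b - G b‖ := norm_pos_iff.mpr (sub_ne_zero.mpr hne)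
  obtain ⟨n, hn⟩ := exists_nat_gt ((L + ‖b‖ * L + K) / ‖g b - G b‖)
  rw [div_lt_iff₀ hpos] at hn
  linarith [hbound n]

variable [IsBoundedSMul R M]

lemma natCast_mul_norm_apply_add_le {e : R → M} {K L : ℝ} (hL : ∀ x, ‖e x‖ ≤ L)
    (hsq : ∀ w, ‖e (w ^ 2) - w • e w‖ ≤ K) (z : R) (m : ℕ) :
    m * ‖e (z + m)‖ ≤ L + K + ‖z‖ * L := by
  set w := z + (m : R)
  have hid : m • e w = e (w ^ 2) - (e (w ^ 2) - w • e w) - z • e w := by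
    rw [add_smul, Nat.cast_smul_eq_nsmul]
    abel
  calc (m : ℝ) * ‖e w‖ = ‖m • e w‖ := by rw [RCLike.norm_nsmul ℝ, nsmul_eq_mul]
    _ ≤ ‖e (w ^ 2)‖ + ‖e (w ^ 2) - w • e w‖ + ‖z‖ * ‖e w‖ := by
      rw [hid]
      exact (norm_sub_le _ _).trans (add_le_add (norm_sub_le _ _) (norm_smul_le _ _))
    _ ≤ L + K + ‖z‖ * L := by gcongr <;> simp only [hL, hsq]

lemma norm_le_half_of_norm_sq_sub_smul_le {e : R → M} {K L : ℝ} (hL : ∀ x, ‖e x‖ ≤ L)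
    (hsq : ∀ w, ‖e (w ^ 2) - w • e w‖ ≤ K)
    (hpm : ∀ c y : R, ‖e (y + y + c ^ 2) - e (-y + -y + c ^ 2) - 4 • e y‖ ≤ 2 * K) (y : R) :
    ‖e y‖ ≤ K / 2 := by
  set C := L + K + ‖y + y‖ * L
  have hdecay : ∀ z : R, ‖z‖ = ‖y + y‖ → ∀ n : ℕ, 0 < n →
      ‖e (z + (n : R) ^ 2)‖ ≤ C / (n : ℝ) ^ 2 := by
    intro z hz n hn
    rw [le_div_iff₀ (by positivity), mul_comm, show C = L + K + ‖z‖ * L by rw [hz]]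
    exact_mod_cast natCast_mul_norm_apply_add_le hL hsq z (n ^ 2)
  have key : ∀ n : ℕ, 0 < n → 4 * ‖e y‖ ≤ 2 * K + 2 * (C / (n : ℝ) ^ 2) := by
    intro n hn
    have hP := hdecay (y + y) rfl n hn
    have hN := hdecay (-y + -y) (by rw [← neg_add, norm_neg]) n hn
    set P := e (y + y + (n : R) ^ 2)
    set N := e (-y + -y + (n : R) ^ 2)
    have h4 : ‖(4 : ℕ) • e y‖ ≤ ‖P - N - 4 • e y‖ + ‖P‖ + ‖N‖ :=
      calc ‖(4 : ℕ) • e y‖ = ‖(P - N) - (P - N - 4 • e y)‖ := by congr 1; abel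
        _ ≤ _ := by linarith [norm_sub_le (P - N) (P - N - 4 • e y), norm_sub_le P N]
    rw [RCLike.norm_nsmul ℝ, nsmul_eq_mul, Nat.cast_ofNat] at h4
    linarith [hpm (n : R) y]
  have hlim : Tendsto (fun n : ℕ ↦ 2 * K + 2 * (C / (n : ℝ) ^ 2)) atTop (𝓝 (2 * K + 2 * 0)) :=
    tendsto_const_nhds.add (tendsto_const_nhds.mul (tendsto_const_nhds.div_atTop
      ((tendsto_pow_atTop two_ne_zero).comp tendsto_natCast_atTop_atTop)))
  linarith [ge_of_tendsto hlim ((eventually_gt_atTop 0).mono key)]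

end ConstantControl

section ApproxGenJordan

variable {R M : Type*} [Ring R] [Module ℂ R] [NormedAddCommGroup M] [Module ℂ M]
  [Module R M] [Module Rᵐᵒᵖ M]

def IsApproxGenJordanDeriv (f g : R → M) (φ : R → R → R → ℝ) : Prop :=
  ∀ (a b c : R) (μ : ℂ), ‖μ‖ = 1 →
    max ‖f (μ • a + μ • b + c ^ 2) - μ • f a - μ • f b - c • f c - op c • g c‖
      ‖g (μ • (a * b) + μ • c) - μ • a • g b - μ • op b • g a - μ • g c‖ ≤ φ a b c

namespace IsApproxGenJordanDeriv

variable {f g : R → M} {φ : R → R → R → ℝ}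

lemma norm_fst_le (h : IsApproxGenJordanDeriv f g φ) (a b c : R) {μ : ℂ} (hμ : ‖μ‖ = 1) :
    ‖f (μ • a + μ • b + c ^ 2) - μ • f a - μ • f b - c • f c - op c • g c‖ ≤ φ a b c :=
  (le_max_left _ _).trans (h a b c μ hμ)

lemma norm_snd_le (h : IsApproxGenJordanDeriv f g φ) (a b c : R) {μ : ℂ} (hμ : ‖μ‖ = 1) :
    ‖g (μ • (a * b) + μ • c) - μ • a • g b - μ • op b • g a - μ • g c‖ ≤ φ a b c :=
  (le_max_right _ _).trans (h a b c μ hμ)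

lemma norm_fst_add_sub_le (h : IsApproxGenJordanDeriv f g φ) (x y : R) :
    ‖f (x + y) - f x - f y‖ ≤ φ x y 0 := by
  simpa using h.norm_fst_le x y 0 norm_one

lemma norm_fst_smul_sub_le (h : IsApproxGenJordanDeriv f g φ) (hf0 : f 0 = 0) {μ : ℂ}
    (hμ : ‖μ‖ = 1) (x : R) : ‖f (μ • x) - μ • f x‖ ≤ φ x 0 0 := by
  simpa [hf0] using h.norm_fst_le x 0 0 hμ

lemma norm_fst_sq_sub_le (h : IsApproxGenJordanDeriv f g φ) (hf0 : f 0 = 0) (c : R) :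
    ‖f (c ^ 2) - c • f c - op c • g c‖ ≤ φ 0 0 c := by
  simpa [hf0] using h.norm_fst_le 0 0 c norm_one

lemma norm_snd_add_sub_le (h : IsApproxGenJordanDeriv f g φ) (hg1 : g 1 = 0) (x y : R) :
    ‖g (x + y) - g x - g y‖ ≤ φ 1 x y := by
  simpa [hg1] using h.norm_snd_le 1 x y norm_one

lemma norm_snd_smul_sub_le (h : IsApproxGenJordanDeriv f g φ) {μ : ℂ} (hμ : ‖μ‖ = 1) (x : R) :
    ‖g (μ • x) - μ • g x‖ ≤ φ 0 0 x := by
  simpa using h.norm_snd_le 0 0 x hμ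

lemma norm_snd_mul_sub_le (h : IsApproxGenJordanDeriv f g φ) (hg0 : g 0 = 0) (a b : R) :
    ‖g (a * b) - a • g b - op b • g a‖ ≤ φ a b 0 := by
  simpa [hg0] using h.norm_snd_le a b 0 norm_one

lemma norm_snd_sq_sub_le (h : IsApproxGenJordanDeriv f g φ) (hg0 : g 0 = 0) (c : R) :
    ‖g (c ^ 2) - c • g c - op c • g c‖ ≤ φ c c 0 := by
  simpa only [sq] using h.norm_snd_mul_sub_le hg0 c c

end IsApproxGenJordanDeriv

end ApproxGenJordan

lemma IsApproxGenJordanDeriv.norm_sub_le_half {R M : Type*} [NormedRing R] [Module ℂ R]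
    [NormedAddCommGroup M] [NormedSpace ℂ M] [Module R M] [Module Rᵐᵒᵖ M] [IsBoundedSMul R M]
    [IsBoundedSMul Rᵐᵒᵖ M] {f g F G : R → M} {K L L' : ℝ}
    (h : IsApproxGenJordanDeriv f g fun _ _ _ ↦ K) (hf0 : f 0 = 0) (hg0 : g 0 = 0)
    (hFadd : ∀ x y, F (x + y) = F x + F y) (hFsq : ∀ a, F (a ^ 2) = a • F a + op a • G a)
    (hGadd : ∀ x y, G (x + y) = G x + G y) (hG1 : G 1 = 0)
    (hfF : ∀ a, ‖f a - F a‖ ≤ L) (hgG : ∀ a, ‖g a - G a‖ ≤ L') (a : R) :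
    ‖f a - F a‖ ≤ K / 2 := by
  obtain rfl : g = G :=
    eq_of_norm_sub_le_of_norm_map_mul_sub_le hGadd hG1 hgG (h.norm_snd_mul_sub_le hg0)
  refine norm_le_half_of_norm_sq_sub_smul_le (e := f - F) hfF (fun w ↦ ?_) (fun c y ↦ ?_) a
  · convert h.norm_fst_sq_sub_le hf0 w using 2
    simp only [Pi.sub_apply, hFsq, smul_sub]
    abel
  · have hFneg : ∀ x, F (-x) = -F x := map_neg (AddMonoidHom.mk' F hFadd)
    have h1 := h.norm_fst_le y y c norm_one
    have h2 := h.norm_fst_le y y c (μ := -1) (by simp)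
    simp only [one_smul] at h1
    simp only [neg_smul, one_smul, sub_neg_eq_add] at h2
    calc _ = ‖(f (y + y + c ^ 2) - f y - f y - c • f c - op c • g c)
          - (f (-y + -y + c ^ 2) + f y + f y - c • f c - op c • g c)‖ := by
          simp only [Pi.sub_apply, hFadd, hFneg]
          congr 1
          abel
      _ ≤ 2 * K := (norm_sub_le _ _).trans (by linarith)

section HyersLimit

variable {R M : Type*} [NormedRing R] [NormedAlgebra ℂ R] [NormedAddCommGroup M]
  [NormedSpace ℂ M] [CompleteSpace M] [Module R M] [Module Rᵐᵒᵖ M]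

namespace IsApproxGenJordanDeriv

variable {f g : R → M} {θ p : ℝ}

lemma tendsto_hyersSeq_fst
    (h : IsApproxGenJordanDeriv f g fun a b c ↦ θ * (‖a‖ ^ p + ‖b‖ ^ p + ‖c‖ ^ p))
    (hp : p < 1) (a : R) : Tendsto (hyersSeq ℂ f a) atTop (𝓝 (hyersLimit ℂ f a)) :=
  tendsto_hyersSeq_hyersLimit hp (C := 2 * θ) (D := θ * ‖(0 : R)‖ ^ p)
    (fun y ↦ (h.norm_fst_add_sub_le y y).trans_eq (by ring)) a

lemma tendsto_hyersSeq_snd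
    (h : IsApproxGenJordanDeriv f g fun a b c ↦ θ * (‖a‖ ^ p + ‖b‖ ^ p + ‖c‖ ^ p))
    (hp : p < 1) (hg1 : g 1 = 0) (a : R) :
    Tendsto (hyersSeq ℂ g a) atTop (𝓝 (hyersLimit ℂ g a)) :=
  tendsto_hyersSeq_hyersLimit hp (C := 2 * θ) (D := θ * ‖(1 : R)‖ ^ p)
    (fun y ↦ (h.norm_snd_add_sub_le hg1 y y).trans_eq (by ring)) a

lemma hyersLimit_fst_add
    (h : IsApproxGenJordanDeriv f g fun a b c ↦ θ * (‖a‖ ^ p + ‖b‖ ^ p + ‖c‖ ^ p))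
    (hp : p < 1) (x y : R) : hyersLimit ℂ f (x + y) = hyersLimit ℂ f x + hyersLimit ℂ f y :=
  map_add_of_tendsto_hyersSeq (h.tendsto_hyersSeq_fst hp) hp (C := θ)
    (D := θ * ‖(0 : R)‖ ^ p) (fun x y ↦ (h.norm_fst_add_sub_le x y).trans_eq (by ring)) x y

lemma hyersLimit_snd_add
    (h : IsApproxGenJordanDeriv f g fun a b c ↦ θ * (‖a‖ ^ p + ‖b‖ ^ p + ‖c‖ ^ p))
    (hp : p < 1) (hg1 : g 1 = 0) (x y : R) :
    hyersLimit ℂ g (x + y) = hyersLimit ℂ g x + hyersLimit ℂ g y :=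
  map_add_of_tendsto_hyersSeq (h.tendsto_hyersSeq_snd hp hg1) hp (C := θ)
    (D := θ * ‖(1 : R)‖ ^ p) (fun x y ↦ (h.norm_snd_add_sub_le hg1 x y).trans_eq (by ring)) x y

lemma hyersLimit_fst_smul
    (h : IsApproxGenJordanDeriv f g fun a b c ↦ θ * (‖a‖ ^ p + ‖b‖ ^ p + ‖c‖ ^ p))
    (hp : p < 1) (hf0 : f 0 = 0) (μ : ℂ) (x : R) :
    hyersLimit ℂ f (μ • x) = μ • hyersLimit ℂ f x :=
  map_smul_of_map_add_of_norm_eq_one (h.hyersLimit_fst_add hp) (fun _ hμ ↦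
    map_smul_of_tendsto_hyersSeq (h.tendsto_hyersSeq_fst hp) hp _ (C := θ)
      (D := 2 * θ * ‖(0 : R)‖ ^ p)
      (fun x ↦ (h.norm_fst_smul_sub_le hf0 hμ x).trans_eq (by ring))) μ x

lemma hyersLimit_snd_smul
    (h : IsApproxGenJordanDeriv f g fun a b c ↦ θ * (‖a‖ ^ p + ‖b‖ ^ p + ‖c‖ ^ p))
    (hp : p < 1) (hg1 : g 1 = 0) (μ : ℂ) (x : R) :
    hyersLimit ℂ g (μ • x) = μ • hyersLimit ℂ g x :=
  map_smul_of_map_add_of_norm_eq_one (h.hyersLimit_snd_add hp hg1) (fun _ hμ ↦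
    map_smul_of_tendsto_hyersSeq (h.tendsto_hyersSeq_snd hp hg1) hp _ (C := θ)
      (D := 2 * θ * ‖(0 : R)‖ ^ p)
      (fun x ↦ (h.norm_snd_smul_sub_le hμ x).trans_eq (by ring))) μ x

variable [IsBoundedSMul R M] [IsBoundedSMul Rᵐᵒᵖ M] [IsScalarTower ℂ R M]
  [IsScalarTower ℂ Rᵐᵒᵖ M]

lemma hyersLimit_fst_sq
    (h : IsApproxGenJordanDeriv f g fun a b c ↦ θ * (‖a‖ ^ p + ‖b‖ ^ p + ‖c‖ ^ p))
    (hp : p < 1) (hf0 : f 0 = 0) (hg1 : g 1 = 0) (c : R) :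
    hyersLimit ℂ f (c ^ 2) = c • hyersLimit ℂ f c + op c • hyersLimit ℂ g c :=
  map_sq_of_tendsto_hyersSeq (h.tendsto_hyersSeq_fst hp) (h.tendsto_hyersSeq_snd hp hg1) hp
    (C := θ) (D := 2 * θ * ‖(0 : R)‖ ^ p)
    (fun c ↦ (h.norm_fst_sq_sub_le hf0 c).trans_eq (by ring)) c

lemma hyersLimit_snd_sq
    (h : IsApproxGenJordanDeriv f g fun a b c ↦ θ * (‖a‖ ^ p + ‖b‖ ^ p + ‖c‖ ^ p))
    (hp : p < 1) (hg0 : g 0 = 0) (hg1 : g 1 = 0) (c : R) :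
    hyersLimit ℂ g (c ^ 2) = c • hyersLimit ℂ g c + op c • hyersLimit ℂ g c :=
  map_sq_of_tendsto_hyersSeq (h.tendsto_hyersSeq_snd hp hg1) (h.tendsto_hyersSeq_snd hp hg1) hp
    (C := 2 * θ) (D := θ * ‖(0 : R)‖ ^ p)
    (fun c ↦ (h.norm_snd_sq_sub_le hg0 c).trans_eq (by ring)) c

lemma isJordanDeriv_hyersLimit_snd
    (h : IsApproxGenJordanDeriv f g fun a b c ↦ θ * (‖a‖ ^ p + ‖b‖ ^ p + ‖c‖ ^ p))
    (hp : p < 1) (hg0 : g 0 = 0) (hg1 : g 1 = 0) : IsJordanDeriv (hyersLimit ℂ g) :=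
  ⟨h.hyersLimit_snd_add hp hg1, h.hyersLimit_snd_smul hp hg1, h.hyersLimit_snd_sq hp hg0 hg1⟩

lemma isGenJordanDeriv_hyersLimit_fst
    (h : IsApproxGenJordanDeriv f g fun a b c ↦ θ * (‖a‖ ^ p + ‖b‖ ^ p + ‖c‖ ^ p))
    (hp : p < 1) (hf0 : f 0 = 0) (hg0 : g 0 = 0) (hg1 : g 1 = 0) :
    IsGenJordanDeriv (hyersLimit ℂ f) :=
  ⟨h.hyersLimit_fst_add hp, h.hyersLimit_fst_smul hp hf0, _,
    h.isJordanDeriv_hyersLimit_snd hp hg0 hg1, h.hyersLimit_fst_sq hp hf0 hg1⟩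

lemma norm_sub_hyersLimit_fst_le
    (h : IsApproxGenJordanDeriv f g fun a b c ↦ θ * (‖a‖ ^ p + ‖b‖ ^ p + ‖c‖ ^ p))
    (hθ : 0 ≤ θ) (hp : p < 1) (hf0 : f 0 = 0) (hg0 : g 0 = 0) (hg1 : g 1 = 0) (a : R) :
    ‖f a - hyersLimit ℂ f a‖ ≤ θ * ‖a‖ ^ p / (1 - 2 ^ (p - 1)) := by
  rcases ne_or_eq p 0 with hp0 | rfl
  · refine (norm_sub_hyersLimit_le hp (C := 2 * θ) (D := θ * ‖(0 : R)‖ ^ p)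
      (fun y ↦ (h.norm_fst_add_sub_le y y).trans_eq (by ring)) a).trans_eq ?_
    rw [norm_zero, Real.zero_rpow hp0]
    ring
  have h3 : IsApproxGenJordanDeriv f g fun _ _ _ ↦ 3 * θ := fun a b c μ hμ ↦
    (h a b c μ hμ).trans_eq (by simp only [Real.rpow_zero]; ring)
  have hG1 : hyersLimit ℂ g 1 = 0 := by simpa using h.hyersLimit_snd_sq hp hg0 hg1 1
  refine (h3.norm_sub_le_half hf0 hg0 (h.hyersLimit_fst_add hp) (h.hyersLimit_fst_sq hp hf0 hg1)
    (h.hyersLimit_snd_add hp hg1) hG1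
    (norm_sub_hyersLimit_le_of_norm_le fun y ↦ by simpa using h3.norm_fst_add_sub_le y y)
    (norm_sub_hyersLimit_le_of_norm_le fun y ↦ by simpa using h3.norm_snd_add_sub_le hg1 y y)
    a).trans ?_
  norm_num
  linarith

end IsApproxGenJordanDeriv

end HyersLimit

theorem stmt (f g : A → X) (θ p : ℝ) (hθ : 0 ≤ θ) (hp : p < 1)
    (hf0 : f 0 = 0) (hg0 : g 0 = 0) (hg1 : g 1 = 0)
    (h : ∀ (a b c : A) (μ : ℂ), ‖μ‖ = 1 →
      max ‖f (μ • a + μ • b + c ^ 2) - μ • f a - μ • f b - c • f c - op c • g c‖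
        ‖g (μ • (a * b) + μ • c) - μ • a • g b - μ • op b • g a - μ • g c‖ ≤ θ * (‖a‖ ^ p + ‖b‖ ^ p + ‖c‖ ^ p)) :
    ∃! d : A → X, IsGenJordanDeriv d ∧
      ∀ a : A, ‖f a - d a‖ ≤ θ * ‖a‖ ^ p / (1 - (2 : ℝ) ^ (p - 1)) := by
  have h' : IsApproxGenJordanDeriv f g fun a b c ↦ θ * (‖a‖ ^ p + ‖b‖ ^ p + ‖c‖ ^ p) := h
  refine ⟨hyersLimit ℂ f, ⟨h'.isGenJordanDeriv_hyersLimit_fst hp hf0 hg0 hg1,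
    h'.norm_sub_hyersLimit_fst_le hθ hp hf0 hg0 hg1⟩, ?_⟩
  rintro d ⟨⟨-, hd, -⟩, hfd⟩
  funext a
  exact tendsto_nhds_unique (tendsto_hyersSeq_of_norm_sub_le hd hp
    (C := θ / (1 - 2 ^ (p - 1))) (fun x ↦ (hfd x).trans_eq (by ring)) a)
    (h'.tendsto_hyersSeq_fst hp a)
end
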